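/- arXiv:1112.4214 — 2 statements merged into one kernel-verified Lean document; each statement's English description precedes it below -/
import Mathlib

section
/- Let W : 𝒳 → ℝ≥0 be a weight function on a finite set 𝒳, W* = max_{X∈𝒳} W(X), and π the Gibbs distribution π(X) = exp(W(X))/Z with Z = Σ_X exp(W(X)). For 0 < ε < 1, let 𝒦 = {X ∈ 𝒳 : W(X) ≤ (1−ε)W*}. If W* > 0, then π(𝒦) ≤ log|𝒳| / (ε W*). -/
open Finset

theorem gibbs_low_weight_set_prob_bound
    {𝒳 : Type*} [Fintype 𝒳] [Nonempty 𝒳] [DecidableEq 𝒳]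
    (W : 𝒳 → ℝ) (hWnonneg : ∀ X, 0 ≤ W X)
    (ε : ℝ) (hε0 : 0 < ε) (hε1 : ε < 1)
    (Wstar : ℝ) (hWstar : Wstar = Finset.univ.sup' Finset.univ_nonempty W)
    (hWpos : 0 < Wstar) :
    (∑ X ∈ Finset.univ.filter (fun X => W X ≤ (1 - ε) * Wstar),
        Real.exp (W X)) / (∑ X, Real.exp (W X)) ≤
      Real.log (Fintype.card 𝒳) / (ε * Wstar) := by
  obtain ⟨X₀, -, hX₀⟩ := Finset.exists_mem_eq_sup' Finset.univ_nonempty W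
  set K := Finset.univ.filter (fun X => W X ≤ (1 - ε) * Wstar) with hKdef
  set N := ∑ X ∈ K, Real.exp (W X) with hNdef
  set Z := ∑ X : 𝒳, Real.exp (W X) with hZdef
  have ht : 0 < ε * Wstar := mul_pos hε0 hWpos
  have hWX₀ : W X₀ = Wstar := by rw [hWstar, ← hX₀]
  have hX₀K : X₀ ∉ K := by
    simp only [hKdef, mem_filter, mem_univ, true_and, not_le, hWX₀]
    nlinarith
  have hZpos : 0 < Z := Finset.sum_pos (fun i _ => Real.exp_pos _) univ_nonempty
  have hN0 : 0 ≤ N := Finset.sum_nonneg fun i _ => (Real.exp_pos _).le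
  have hKsub : K ⊆ Finset.univ.erase X₀ := fun x hx =>
    Finset.mem_erase.2 ⟨fun h => hX₀K (h ▸ hx), Finset.mem_univ x⟩
  have hNZ' : Real.exp Wstar + N ≤ Z := by
    have h1 : N ≤ ∑ X ∈ Finset.univ.erase X₀, Real.exp (W X) :=
      Finset.sum_le_sum_of_subset_of_nonneg hKsub (fun i _ _ => (Real.exp_pos _).le)
    have h2 : Real.exp (W X₀) + ∑ X ∈ Finset.univ.erase X₀, Real.exp (W X) = Z :=
      Finset.add_sum_erase _ (fun X => Real.exp (W X)) (Finset.mem_univ X₀)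
    rw [hWX₀] at h2
    linarith
  have hNZ : N ≤ Z := by
    have := Real.exp_pos Wstar
    linarith
  set n := Fintype.card 𝒳 with hn
  have hn1 : 1 ≤ n := Fintype.card_pos
  have ha0 : 0 ≤ Real.log n := Real.log_nonneg (by exact_mod_cast hn1)
  rw [div_le_div_iff₀ hZpos ht]
  by_cases hcase : ε * Wstar ≤ Real.log n
  · calc N * (ε * Wstar) ≤ N * Real.log n := by nlinarith
      _ ≤ Real.log n * Z := by nlinarith
  · push_neg at hcase
    by_cases hn2 : n = 1
    · have hKempty : K = ∅ := by
        have hc := Finset.card_le_card hKsub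
        rw [Finset.card_erase_of_mem (Finset.mem_univ X₀), Finset.card_univ, ← hn, hn2] at hc
        simpa using Finset.card_eq_zero.1 (Nat.le_zero.1 hc)
      have hN : N = 0 := by rw [hNdef, hKempty]; simp
      rw [hN, hn2]
      simp
    · have hn2' : 2 ≤ n := by omega
      have ha2 : Real.log 2 ≤ Real.log n :=
        Real.log_le_log (by norm_num) (by exact_mod_cast hn2')
      set a := Real.log n with hadef
      set t := ε * Wstar with htdef
      have hs : 0 < t - a := by linarith
      have key1 : (t - a) * Real.exp (a - t) ≤ Real.exp (-1 : ℝ) := by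
        have h := Real.add_one_le_exp (t - a - 1)
        have h' : t - a ≤ Real.exp (t - a - 1) := by linarith
        calc (t - a) * Real.exp (a - t) ≤ Real.exp (t - a - 1) * Real.exp (a - t) := by
              nlinarith [Real.exp_pos (a - t)]
          _ = Real.exp (-1 : ℝ) := by rw [← Real.exp_add]; ring_nf
      have key2 : Real.exp (-1 : ℝ) ≤ a := by
        have h1 : Real.exp (-1 : ℝ) ≤ 1/2 := by
          rw [Real.exp_neg]
          have h := Real.exp_one_gt_d9
          rw [inv_le_comm₀ (Real.exp_pos 1) (by norm_num)]
          linarith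
        have h2 : (1:ℝ)/2 ≤ Real.log 2 := by
          have := Real.log_two_gt_d9
          linarith
        linarith
      have hNn : N ≤ (n : ℝ) * Real.exp ((1 - ε) * Wstar) := by
        calc N ≤ K.card • Real.exp ((1 - ε) * Wstar) :=
              Finset.sum_le_card_nsmul _ _ _ (fun x hx => by
                have hx' := (Finset.mem_filter.1 hx).2
                exact Real.exp_le_exp.2 hx')
          _ = (K.card : ℝ) * Real.exp ((1 - ε) * Wstar) := by rw [nsmul_eq_mul]
          _ ≤ (n : ℝ) * Real.exp ((1 - ε) * Wstar) := by
              have hc : (K.card : ℝ) ≤ (n : ℝ) := by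
                have := Finset.card_le_card (Finset.subset_univ K)
                rw [Finset.card_univ] at this
                exact_mod_cast this
              nlinarith [Real.exp_pos ((1 - ε) * Wstar)]
      have hkey : (n : ℝ) * Real.exp ((1 - ε) * Wstar) * (t - a) ≤ Real.exp Wstar * a := by
        have hne : (n : ℝ) = Real.exp a := by
          rw [hadef, Real.exp_log (by exact_mod_cast hn1 : (0:ℝ) < n)]
        have he1 : (1 - ε) * Wstar = Wstar - t := by rw [htdef]; ring
        rw [hne, he1, ← Real.exp_add]
        have he2 : Real.exp (a + (Wstar - t)) = Real.exp Wstar * Real.exp (a - t) := by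
          rw [← Real.exp_add]; ring_nf
        rw [he2]
        nlinarith [Real.exp_pos Wstar]
      calc N * t = N * a + N * (t - a) := by ring
        _ ≤ N * a + (n : ℝ) * Real.exp ((1 - ε) * Wstar) * (t - a) := by nlinarith
        _ ≤ N * a + Real.exp Wstar * a := by linarith
        _ ≤ Z * a := by nlinarith
        _ = a * Z := mul_comm _ _
end

section
/- Suppose a sequence β_n ≥ 0 satisfies β_{n+1} ≤ (1 − 1/T_{n+1})((1 + α_n)β_n + 2α_n) for all n, where T_{n+1} ≥ 1 and 0 ≤ α_n ≤ δ/(8 T_{n+1}) for a fixed δ ∈ (0,1]. If β_n ≤ δ/2 for some n, then β_m ≤ δ/2 for all m ≥ n. -/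
theorem beta_stays_small
    (β α T : ℕ → ℝ) (δ : ℝ) (hδ0 : 0 < δ) (hδ1 : δ ≤ 1)
    (hβ : ∀ n, 0 ≤ β n) (hT : ∀ n, 1 ≤ T n) (hα0 : ∀ n, 0 ≤ α n)
    (hαT : ∀ n, α n ≤ δ / (8 * T (n + 1)))
    (hrec : ∀ n, β (n + 1) ≤ (1 - 1 / T (n + 1)) * ((1 + α n) * β n + 2 * α n)) :
    ∀ n, β n ≤ δ / 2 → ∀ m, n ≤ m → β m ≤ δ / 2 := by
  intro n hn m hm
  induction m, hm using Nat.le_induction with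
  | base => exact hn
  | succ m hm ih =>
    have ht : 1 ≤ T (m + 1) := hT (m + 1)
    have ht0 : 0 < T (m + 1) := by linarith
    have hα := hα0 m
    have hβm := hβ m
    have hr := hrec m
    set u : ℝ := 1 / T (m + 1) with hu
    have hu0 : 0 < u := by positivity
    have hu1 : u ≤ 1 := by
      rw [hu, div_le_one ht0]; exact ht
    have hαu : 8 * α m ≤ δ * u := by
      have h8 : (0:ℝ) < 8 * T (m + 1) := by linarith
      have := (le_div_iff₀ h8).mp (hαT m)
      have htne : T (m + 1) ≠ 0 := ne_of_gt ht0
      rw [hu]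
      rw [div_eq_inv_mul] at *
      nlinarith [this, mul_pos hu0 ht0, one_div_mul_cancel htne]
    nlinarith [hr, mul_nonneg hα hβm, mul_nonneg (mul_nonneg hu0.le hδ0.le) hu0.le,
      mul_le_mul_of_nonneg_left ih (sub_nonneg.mpr hu1),
      mul_nonneg (sub_nonneg.mpr hu1) hα, mul_le_mul_of_nonneg_left hαu hu0.le,
      mul_nonneg (mul_nonneg hu0.le hα) hβm, mul_le_mul_of_nonneg_right hαu hβm]
end
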